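/- Derivative replacement preserves dimension: with M ∈ 𝒞̄_{ω(3)} and b̄ ∈ R_n^M (n ≥ 4), and M^{b̄} constructed by replacing b̄ with the chain of ternary relations through new points x₁,…,x_{n−1} together with the (n−1)-ary relation (x₁,…,x_{n−1}), the inclusion M → M^{b̄} is an embedding of pregeometries: for every finite A ⊆ M, d_M(A) = d_{M^{b̄}}(A). -/

import Mathlib

open Classical

/-- A relational structure for a language with relation symbols indexed by `I`,
where `R_i` has arity `ar i`, over a universe `U`.  The carrier may be infinite. -/
structure BigFS (I : Type) (ar : I → ℕ) (U : Type) where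
  carrier : Set U
  rels : Set ((i : I) × (Fin (ar i) → U))
  mem_carrier : ∀ r ∈ rels, ∀ k, r.2 k ∈ carrier

namespace BigFS

variable {I U : Type} {ar : I → ℕ}

/-- The relation instances of `M` all of whose entries lie in `S`
(the relations of the induced substructure on `S`). -/
def relsIn (M : BigFS I ar U) (S : Set U) : Set ((i : I) × (Fin (ar i) → U)) :=
  {r ∈ M.rels | ∀ k, r.2 k ∈ S}

/-- The predimension `δ(S) = |S| - Σ_i α_i |R_i^S|` of the induced substructure of `M`
on the finite set `S` (with weights `α`). -/
noncomputable def bdelta (α : I → ℕ) (M : BigFS I ar U) (S : Finset U) : ℤ :=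
  (S.card : ℤ) - ∑ᶠ r ∈ M.relsIn ↑S, (α r.1 : ℤ)

/-- `M ∈ 𝒞̄_f`: every finite substructure has finitely many relation instances and
nonnegative predimension. -/
def inCbar (α : I → ℕ) (M : BigFS I ar U) : Prop :=
  ∀ S : Finset U, ↑S ⊆ M.carrier → (M.relsIn ↑S).Finite ∧ 0 ≤ bdelta α M S

/-- The dimension `d_M(S) = min { δ(T) : S ⊆ T ⊆ M finite }`. -/
noncomputable def dim (α : I → ℕ) (M : BigFS I ar U) (S : Finset U) : ℤ :=
  sInf {z : ℤ | ∃ T : Finset U, S ⊆ T ∧ ↑T ⊆ M.carrier ∧ bdelta α M T = z}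

/-- A finite subset `S` is self-sufficient in `M`: `δ(S) ≤ δ(T)` for all finite
`S ⊆ T ⊆ M`. -/
def ssIn (α : I → ℕ) (M : BigFS I ar U) (S : Finset U) : Prop :=
  ↑S ⊆ M.carrier ∧ ∀ T : Finset U, S ⊆ T → ↑T ⊆ M.carrier → bdelta α M S ≤ bdelta α M T

/-- A (possibly infinite) subset `Z` is self-sufficient in `M`:
`δ(Z ∩ T) ≤ δ(T)` for every finite substructure `T` of `M`. -/
def ssSet (α : I → ℕ) (M : BigFS I ar U) (Z : Set U) : Prop :=
  Z ⊆ M.carrier ∧ ∀ T : Finset U, ↑T ⊆ M.carrier →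
    bdelta α M (T.filter (fun x => x ∈ Z)) ≤ bdelta α M T

/-- The induced substructure of `M` on the set `Z`. -/
def inducedBig (M : BigFS I ar U) (Z : Set U) : BigFS I ar U :=
  ⟨M.carrier ∩ Z, M.relsIn Z, fun r hr k => ⟨M.mem_carrier r hr.1 k, hr.2 k⟩⟩

/-- An embedding of `B` into `M` (as `L_f`-structures): injective on the carrier,
mapping into the carrier, preserving and reflecting all relations. -/
def IsEmb {V : Type} (B : BigFS I ar U) (M : BigFS I ar V) (g : U → V) : Prop :=
  Set.InjOn g B.carrier ∧ g '' B.carrier ⊆ M.carrier ∧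
  ∀ r : (i : I) × (Fin (ar i) → U), (∀ k, r.2 k ∈ B.carrier) →
    (r ∈ B.rels ↔ (⟨r.1, g ∘ r.2⟩ : (i : I) × (Fin (ar i) → V)) ∈ M.rels)

/-- `M` is a (countable) generic structure for `(𝒞_f, ≤)`: all finite substructures
lie in `𝒞_f` and `M` has the extension property: whenever `Z ≤ M`, `Z ≤ B ∈ 𝒞_f`
(with the same induced structure on `Z`), `B` embeds into `M` over `Z` with
self-sufficient image. -/
def IsGeneric (α : I → ℕ) (M : BigFS I ar U) : Prop :=
  M.carrier.Countable ∧ inCbar α M ∧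
  ∀ B : BigFS I ar U, B.carrier.Finite → inCbar α B →
  ∀ Z : Set U, Z ⊆ B.carrier → ssSet α B Z → ssSet α M Z →
    inducedBig B Z = inducedBig M Z →
    ∃ g : U → U, IsEmb B M g ∧ (∀ a ∈ Z, g a = a) ∧ ssSet α M (g '' B.carrier)

/-- The `d`-closure of a finite set `A` in `M`:
`{c ∈ M : d(A ∪ {c}) = d(A)}`. -/
noncomputable def cld (α : I → ℕ) (M : BigFS I ar U) (A : Finset U) : Set U :=
  {c | c ∈ M.carrier ∧ dim α M (insert c A) = dim α M A}

end BigFS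

open BigFS
/-- The language `L_{ω(3)}`: one `k`-ary relation for each `k ≥ 3`. -/
abbrev Iw : Type := {k : ℕ // 3 ≤ k}
abbrev arw : Iw → ℕ := fun i => i.1

namespace DerivAux

variable {U : Type}

/-- The long relation being replaced. -/
def brel {m : ℕ} (hm : 3 ≤ m) (b : Fin (m + 1) → U) : (i : Iw) × (Fin i.1 → U) :=
  ⟨⟨m + 1, Nat.le_succ_of_le hm⟩, b⟩

/-- The ternary chain relations. -/
def chainr {m : ℕ} (b : Fin (m + 1) → U) (x : Fin m → U) (k : Fin m) :
    (i : Iw) × (Fin i.1 → U) :=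
  ⟨⟨3, le_refl 3⟩, ![b k.castSucc, x k, b k.succ]⟩

/-- The new `m`-ary relation on the new points. -/
def xrel {m : ℕ} (hm : 3 ≤ m) (x : Fin m → U) : (i : Iw) × (Fin i.1 → U) :=
  ⟨⟨m, hm⟩, x⟩

lemma finsum_one {γ : Type} {s : Set γ} (hs : s.Finite) :
    ∑ᶠ r ∈ s, (1 : ℤ) = s.ncard := by
  conv_lhs => rw [← hs.coe_toFinset]
  rw [finsum_mem_coe_finset, Finset.sum_const, Set.ncard_eq_toFinset_card _ hs]
  simp

lemma bdelta_eq {I : Type} {ar : I → ℕ} (M : BigFS I ar U) (S : Finset U)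
    (h : (M.relsIn ↑S).Finite) :
    bdelta (fun _ => 1) M S = (S.card : ℤ) - (M.relsIn ↑S).ncard := by
  unfold bdelta
  rw [show (∑ᶠ r ∈ M.relsIn ↑S, (((fun _ => 1 : I → ℕ) r.1 : ℕ) : ℤ))
      = ∑ᶠ r ∈ M.relsIn ↑S, (1 : ℤ) by norm_num, finsum_one h]

lemma relsIn_filter {I : Type} {ar : I → ℕ} (M : BigFS I ar U) (T : Finset U) :
    M.relsIn ↑(T.filter (fun u => u ∈ M.carrier)) = M.relsIn ↑T := by
  ext r
  simp only [relsIn, Set.mem_setOf_eq, Finset.coe_filter, Finset.mem_coe]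
  constructor
  · rintro ⟨h1, h2⟩; exact ⟨h1, fun k => (h2 k).1⟩
  · rintro ⟨h1, h2⟩; exact ⟨h1, fun k => ⟨h2 k, M.mem_carrier r h1 k⟩⟩

section Main

variable (M : BigFS Iw arw U) (m : ℕ) (hm : 3 ≤ m) (b : Fin (m + 1) → U)
  (x : Fin m → U)

lemma chainr_notin_M (hxnew : ∀ k, x k ∉ M.carrier) (k : Fin m) :
    chainr b x k ∉ M.rels := by
  intro h
  have := M.mem_carrier _ h (1 : Fin 3)
  exact hxnew k (by simpa [chainr] using this)

lemma xrel_notin_M (hxnew : ∀ k, x k ∉ M.carrier) : xrel hm x ∉ M.rels := by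
  intro h
  have h0 : (0 : ℕ) < m := by omega
  exact hxnew ⟨0, h0⟩ (M.mem_carrier _ h (⟨0, h0⟩ : Fin m))

lemma chainr_injective (hxinj : Function.Injective x) :
    Function.Injective (chainr b x) := by
  intro k k' h
  have h2 : (![b k.castSucc, x k, b k.succ] : Fin 3 → U)
      = ![b k'.castSucc, x k', b k'.succ] := by
    have := (Sigma.mk.inj_iff.mp h).2
    exact eq_of_heq this
  have := congrFun h2 1
  simp only [Matrix.cons_val_one, Matrix.head_cons] at this
  exact hxinj this

lemma brel_ne_chainr (k : Fin m) : brel hm b ≠ chainr b x k := by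
  intro h
  have h1 := (Sigma.mk.inj_iff.mp h).1
  have h2 : m + 1 = 3 := congrArg Subtype.val h1
  omega

lemma brel_ne_xrel : brel hm b ≠ xrel hm x := by
  intro h
  have h1 := (Sigma.mk.inj_iff.mp h).1
  have h2 : m + 1 = m := congrArg Subtype.val h1
  omega

lemma chainr_ne_xrel
    (hb : (⟨⟨m + 1, Nat.le_succ_of_le hm⟩, b⟩ : (i : Iw) × (Fin i.1 → U)) ∈ M.rels)
    (hxnew : ∀ k, x k ∉ M.carrier) (k : Fin m) : chainr b x k ≠ xrel hm x := by
  intro h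
  have hrange : Set.range (chainr b x k).2 = Set.range (xrel hm x).2 := by rw [h]
  have hbk : b k.castSucc ∈ M.carrier := M.mem_carrier _ hb k.castSucc
  have hmem : b k.castSucc ∈ Set.range (chainr b x k).2 := ⟨(0 : Fin 3), rfl⟩
  rw [hrange] at hmem
  obtain ⟨j, hj⟩ := hmem
  have hj' : x j = b k.castSucc := hj
  exact hxnew j (hj' ▸ hbk)

variable (M' : BigFS Iw arw U)

lemma relsIn_M'
    (hb : (⟨⟨m + 1, Nat.le_succ_of_le hm⟩, b⟩ : (i : Iw) × (Fin i.1 → U)) ∈ M.rels)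
    (hr : M'.rels =
      (M.rels \ {(⟨⟨m + 1, Nat.le_succ_of_le hm⟩, b⟩ : (i : Iw) × (Fin i.1 → U))}) ∪
      {r | ∃ k : Fin m, r = (⟨⟨3, le_refl 3⟩,
          ![b k.castSucc, x k, b k.succ]⟩ : (i : Iw) × (Fin i.1 → U))} ∪
      {(⟨⟨m, hm⟩, x⟩ : (i : Iw) × (Fin i.1 → U))})
    (T : Finset U) :
    M'.relsIn ↑T =
      (M.relsIn ↑T \ {brel hm b}) ∪
      ↑((Finset.univ.filter
          (fun k : Fin m => b k.castSucc ∈ T ∧ x k ∈ T ∧ b k.succ ∈ T)).image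
          (chainr b x)) ∪
      (if ∀ j, x j ∈ T then ({xrel hm x} : Set ((i : Iw) × (Fin i.1 → U))) else ∅) := by
  ext r
  simp only [relsIn, Set.mem_setOf_eq]
  constructor
  · rintro ⟨hmem, hent⟩
    rw [hr] at hmem
    rcases hmem with (⟨h1, h2⟩ | ⟨k, rfl⟩) | hx
    · exact Or.inl (Or.inl ⟨⟨h1, hent⟩, h2⟩)
    · refine Or.inl (Or.inr ?_)
      rw [Finset.mem_coe, Finset.mem_image]
      refine ⟨k, ?_, rfl⟩
      rw [Finset.mem_filter]
      refine ⟨Finset.mem_univ k, ?_, ?_, ?_⟩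
      all_goals
        have hent3 : ∀ j : Fin 3, (![b k.castSucc, x k, b k.succ]) j ∈ (↑T : Set U) := hent
      · have := hent3 0; simpa using this
      · have := hent3 1; simpa using this
      · have := hent3 2; simpa using this
    · have hx' : r = xrel hm x := hx
      refine Or.inr ?_
      rw [if_pos]
      · exact hx'
      · intro j
        have := hent (hx' ▸ j)
        subst hx'
        simpa [xrel] using this
  · rintro ((⟨⟨h1, hent⟩, h2⟩ | hchain) | hx)
    · refine ⟨?_, hent⟩
      rw [hr]; exact Or.inl (Or.inl ⟨h1, h2⟩)
    · rw [Finset.mem_coe, Finset.mem_image] at hchain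
      obtain ⟨k, hk, rfl⟩ := hchain
      rw [Finset.mem_filter] at hk
      obtain ⟨-, hk1, hk2, hk3⟩ := hk
      refine ⟨?_, ?_⟩
      · rw [hr]; exact Or.inl (Or.inr ⟨k, rfl⟩)
      · intro j
        fin_cases j <;> simpa [chainr] using by first | exact hk1 | exact hk2 | exact hk3
    · by_cases hall : ∀ j, x j ∈ T
      · rw [if_pos hall] at hx
        have hx' : r = xrel hm x := hx
        subst hx'
        refine ⟨?_, fun j => hall j⟩
        rw [hr]; exact Or.inr rfl
      · rw [if_neg hall] at hx
        exact absurd hx (Set.notMem_empty r)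

lemma bdelta_M'
    (hM : inCbar (fun _ => 1) M)
    (hb : (⟨⟨m + 1, Nat.le_succ_of_le hm⟩, b⟩ : (i : Iw) × (Fin i.1 → U)) ∈ M.rels)
    (hxinj : Function.Injective x)
    (hxnew : ∀ k, x k ∉ M.carrier)
    (hr : M'.rels =
      (M.rels \ {(⟨⟨m + 1, Nat.le_succ_of_le hm⟩, b⟩ : (i : Iw) × (Fin i.1 → U))}) ∪
      {r | ∃ k : Fin m, r = (⟨⟨3, le_refl 3⟩,
          ![b k.castSucc, x k, b k.succ]⟩ : (i : Iw) × (Fin i.1 → U))} ∪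
      {(⟨⟨m, hm⟩, x⟩ : (i : Iw) × (Fin i.1 → U))})
    (T : Finset U) :
    bdelta (fun _ => 1) M' T =
      bdelta (fun _ => 1) M (T.filter (fun u => u ∈ M.carrier))
      + (if brel hm b ∈ M.relsIn ↑T then 1 else 0)
      + ((T.filter (fun u => u ∉ M.carrier)).card : ℤ)
      - ((Finset.univ.filter
          (fun k : Fin m => b k.castSucc ∈ T ∧ x k ∈ T ∧ b k.succ ∈ T)).card : ℤ)
      - (if ∀ j, x j ∈ T then 1 else 0) := by
  classical
  set T₀ := T.filter (fun u => u ∈ M.carrier) with hT₀def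
  have hT₀ : ↑T₀ ⊆ M.carrier := by
    intro u hu
    rw [hT₀def] at hu
    simp only [Finset.coe_filter, Set.mem_setOf_eq] at hu
    exact hu.2
  have hfin0 : (M.relsIn ↑T₀).Finite := (hM T₀ hT₀).1
  have hfin : (M.relsIn ↑T).Finite := by
    rw [← relsIn_filter M T]; exact hfin0
  set K := Finset.univ.filter
      (fun k : Fin m => b k.castSucc ∈ T ∧ x k ∈ T ∧ b k.succ ∈ T) with hKdef
  set A : Set ((i : Iw) × (Fin i.1 → U)) := M.relsIn ↑T \ {brel hm b} with hAdef
  set B : Set ((i : Iw) × (Fin i.1 → U)) := ↑(K.image (chainr b x)) with hBdef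
  set E : Set ((i : Iw) × (Fin i.1 → U)) :=
    (if ∀ j, x j ∈ T then ({xrel hm x} : Set _) else ∅) with hEdef
  have hdecomp : M'.relsIn ↑T = A ∪ B ∪ E := relsIn_M' M m hm b x M' hb hr T
  have hAfin : A.Finite := hfin.subset Set.diff_subset
  have hBfin : B.Finite := (K.image (chainr b x)).finite_toSet
  have hEfin : E.Finite := by
    rw [hEdef]; split_ifs
    · exact Set.finite_singleton _
    · exact Set.finite_empty
  have hfin' : (M'.relsIn ↑T).Finite := by
    rw [hdecomp]; exact (hAfin.union hBfin).union hEfin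
  have hdisjAB : Disjoint A B := by
    rw [Set.disjoint_left]
    intro r hrA hrB
    rw [hBdef, Finset.mem_coe, Finset.mem_image] at hrB
    obtain ⟨k, -, rfl⟩ := hrB
    exact chainr_notin_M M m b x hxnew k hrA.1.1
  have hdisjABE : Disjoint (A ∪ B) E := by
    rw [Set.disjoint_left]
    intro r hrAB hrE
    rw [hEdef] at hrE
    split_ifs at hrE
    · have hr' : r = xrel hm x := hrE
      subst hr'
      rcases hrAB with hA' | hB'
      · exact xrel_notin_M M m hm x hxnew hA'.1.1
      · rw [hBdef, Finset.mem_coe, Finset.mem_image] at hB'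
        obtain ⟨k, -, hk⟩ := hB'
        exact chainr_ne_xrel M m hm b x hb hxnew k hk
    · exact hrE
  have hcardunion : (M'.relsIn ↑T).ncard = A.ncard + B.ncard + E.ncard := by
    rw [hdecomp, Set.ncard_union_eq hdisjABE (hAfin.union hBfin) hEfin,
      Set.ncard_union_eq hdisjAB hAfin hBfin]
  have hBcard : B.ncard = K.card := by
    rw [hBdef, Set.ncard_coe_finset,
      Finset.card_image_of_injective K (chainr_injective m b x hxinj)]
  have hEcard : (E.ncard : ℤ) = (if ∀ j, x j ∈ T then 1 else 0) := by
    rw [hEdef]; split_ifs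
    · simp
    · simp
  have hAcard : (A.ncard : ℤ)
      = (M.relsIn ↑T).ncard - (if brel hm b ∈ M.relsIn ↑T then 1 else 0) := by
    by_cases hd : brel hm b ∈ M.relsIn ↑T
    · rw [if_pos hd, hAdef]
      have := Set.ncard_diff_singleton_add_one hd hfin
      push_cast [← this]
      ring
    · rw [if_neg hd, hAdef, Set.diff_singleton_eq_self hd]
      ring
  have hcardsplit : T₀.card + (T.filter (fun u => u ∉ M.carrier)).card = T.card := by
    rw [hT₀def]
    exact Finset.card_filter_add_card_filter_not (p := fun u => u ∈ M.carrier)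
  rw [bdelta_eq M' T hfin', bdelta_eq M T₀ hfin0, relsIn_filter M T, hcardunion,
    hBcard]
  push_cast
  rw [hAcard]
  rw [← hEcard]
  have : (T₀.card : ℤ) + (T.filter (fun u => u ∉ M.carrier)).card = T.card := by
    exact_mod_cast hcardsplit
  split_ifs with h1 <;> push_cast <;> linarith

lemma bdelta_M'_ge
    (hM : inCbar (fun _ => 1) M)
    (hb : (⟨⟨m + 1, Nat.le_succ_of_le hm⟩, b⟩ : (i : Iw) × (Fin i.1 → U)) ∈ M.rels)
    (hxinj : Function.Injective x)
    (hxnew : ∀ k, x k ∉ M.carrier)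
    (hr : M'.rels =
      (M.rels \ {(⟨⟨m + 1, Nat.le_succ_of_le hm⟩, b⟩ : (i : Iw) × (Fin i.1 → U))}) ∪
      {r | ∃ k : Fin m, r = (⟨⟨3, le_refl 3⟩,
          ![b k.castSucc, x k, b k.succ]⟩ : (i : Iw) × (Fin i.1 → U))} ∪
      {(⟨⟨m, hm⟩, x⟩ : (i : Iw) × (Fin i.1 → U))})
    (T : Finset U) :
    bdelta (fun _ => 1) M (T.filter (fun u => u ∈ M.carrier))
      ≤ bdelta (fun _ => 1) M' T := by
  classical
  rw [bdelta_M' M m hm b x M' hM hb hxinj hxnew hr T]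
  set K := Finset.univ.filter
      (fun k : Fin m => b k.castSucc ∈ T ∧ x k ∈ T ∧ b k.succ ∈ T) with hKdef
  have key : (K.card : ℤ) + (if ∀ j, x j ∈ T then 1 else 0)
      ≤ (if brel hm b ∈ M.relsIn ↑T then 1 else 0)
      + ((T.filter (fun u => u ∉ M.carrier)).card : ℤ) := by
    by_cases he : ∀ j, x j ∈ T
    · rw [if_pos he]
      have hX : m ≤ (T.filter (fun u => u ∉ M.carrier)).card := by
        have hsub : Finset.univ.image x ⊆ T.filter (fun u => u ∉ M.carrier) := by
          intro u hu
          rw [Finset.mem_image] at hu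
          obtain ⟨j, -, rfl⟩ := hu
          simp only [Finset.mem_filter]
          exact ⟨he j, hxnew j⟩
        have := Finset.card_le_card hsub
        rwa [Finset.card_image_of_injective _ hxinj, Finset.card_univ,
          Fintype.card_fin] at this
      have hX' : (m : ℤ) ≤ ((T.filter (fun u => u ∉ M.carrier)).card : ℤ) := by
        exact_mod_cast hX
      by_cases hKu : K = Finset.univ
      · have hall : ∀ k : Fin m, b k.castSucc ∈ T ∧ x k ∈ T ∧ b k.succ ∈ T := by
          intro k
          have hk : k ∈ K := by rw [hKu]; exact Finset.mem_univ k
          rw [hKdef, Finset.mem_filter] at hk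
          exact hk.2
        have hball : ∀ j' : Fin (m + 1), b j' ∈ T := by
          intro j'
          rcases Nat.lt_or_ge j'.1 m with hlt | hge
          · have h1 := (hall ⟨j'.1, hlt⟩).1
            have heq : (⟨j'.1, hlt⟩ : Fin m).castSucc = j' := by
              apply Fin.ext; simp
            rwa [heq] at h1
          · have hm1 : m - 1 < m := by omega
            have h1 := (hall ⟨m - 1, hm1⟩).2.2
            have heq : (⟨m - 1, hm1⟩ : Fin m).succ = j' := by
              apply Fin.ext
              have : j'.1 = m := by omega
              simp [this]
              omega
            rwa [heq] at h1
        have hd : brel hm b ∈ M.relsIn ↑T := by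
          refine ⟨hb, ?_⟩
          intro j
          exact Finset.mem_coe.mpr (hball j)
        rw [if_pos hd]
        have hKle : K.card ≤ m := by
          have h1 : K.card ≤ (Finset.univ : Finset (Fin m)).card :=
            Finset.card_le_card (Finset.subset_univ K)
          rwa [Finset.card_univ, Fintype.card_fin] at h1
        have hKle' : (K.card : ℤ) ≤ m := by exact_mod_cast hKle
        linarith
      · have hKlt : K.card < m := by
          have h1 : K ⊂ Finset.univ := Finset.ssubset_univ_iff.mpr hKu
          have h2 := Finset.card_lt_card h1
          rwa [Finset.card_univ, Fintype.card_fin] at h2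
        have hKlt' : (K.card : ℤ) < m := by exact_mod_cast hKlt
        split_ifs <;> linarith
    · rw [if_neg he]
      have hc' : K.card ≤ (T.filter (fun u => u ∉ M.carrier)).card := by
        apply Finset.card_le_card_of_injOn x
        · intro k hk
          rw [hKdef, Finset.mem_coe, Finset.mem_filter] at hk
          simp only [Finset.mem_coe, Finset.mem_filter]
          exact ⟨hk.2.2.1, hxnew k⟩
        · exact fun a _ c _ h => hxinj h
      have hc'' : (K.card : ℤ) ≤ ((T.filter (fun u => u ∉ M.carrier)).card : ℤ) := by
        exact_mod_cast hc'
      split_ifs <;> linarith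
  linarith

lemma exists_matching
    (hM : inCbar (fun _ => 1) M)
    (hb : (⟨⟨m + 1, Nat.le_succ_of_le hm⟩, b⟩ : (i : Iw) × (Fin i.1 → U)) ∈ M.rels)
    (hxinj : Function.Injective x)
    (hxnew : ∀ k, x k ∉ M.carrier)
    (hc : M'.carrier = M.carrier ∪ Set.range x)
    (hr : M'.rels =
      (M.rels \ {(⟨⟨m + 1, Nat.le_succ_of_le hm⟩, b⟩ : (i : Iw) × (Fin i.1 → U))}) ∪
      {r | ∃ k : Fin m, r = (⟨⟨3, le_refl 3⟩,
          ![b k.castSucc, x k, b k.succ]⟩ : (i : Iw) × (Fin i.1 → U))} ∪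
      {(⟨⟨m, hm⟩, x⟩ : (i : Iw) × (Fin i.1 → U))})
    (T₀ : Finset U) (hT₀ : ↑T₀ ⊆ M.carrier) :
    ∃ T : Finset U, T₀ ⊆ T ∧ ↑T ⊆ M'.carrier ∧
      bdelta (fun _ => 1) M' T = bdelta (fun _ => 1) M T₀ := by
  classical
  by_cases hd : brel hm b ∈ M.relsIn ↑T₀
  · refine ⟨T₀ ∪ Finset.univ.image x, Finset.subset_union_left, ?_, ?_⟩
    · rw [hc]
      intro u hu
      rcases Finset.mem_union.mp (Finset.mem_coe.mp hu) with h | h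
      · exact Or.inl (hT₀ h)
      · obtain ⟨j, -, rfl⟩ := Finset.mem_image.mp h
        exact Or.inr ⟨j, rfl⟩
    · set T := T₀ ∪ Finset.univ.image x with hTdef
      have hball : ∀ j : Fin (m + 1), b j ∈ T₀ := by
        intro j
        exact Finset.mem_coe.mp (hd.2 j)
      have hfilter : T.filter (fun u => u ∈ M.carrier) = T₀ := by
        ext u
        simp only [hTdef, Finset.mem_filter, Finset.mem_union, Finset.mem_image]
        constructor
        · rintro ⟨h1 | ⟨j, -, rfl⟩, h2⟩
          · exact h1
          · exact absurd h2 (hxnew j)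
        · intro h
          exact ⟨Or.inl h, hT₀ h⟩
      have hfilter2 : T.filter (fun u => u ∉ M.carrier) = Finset.univ.image x := by
        ext u
        simp only [hTdef, Finset.mem_filter, Finset.mem_union, Finset.mem_image]
        constructor
        · rintro ⟨h1 | h1, h2⟩
          · exact absurd (hT₀ h1) h2
          · exact h1
        · rintro ⟨j, -, rfl⟩
          exact ⟨Or.inr ⟨j, Finset.mem_univ j, rfl⟩, hxnew j⟩
      have hK : Finset.univ.filter
          (fun k : Fin m => b k.castSucc ∈ T ∧ x k ∈ T ∧ b k.succ ∈ T)
          = Finset.univ := by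
        rw [Finset.eq_univ_iff_forall]
        intro k
        rw [Finset.mem_filter]
        refine ⟨Finset.mem_univ k, ?_, ?_, ?_⟩
        · exact Finset.mem_union_left _ (hball k.castSucc)
        · exact Finset.mem_union_right _
            (Finset.mem_image_of_mem x (Finset.mem_univ k))
        · exact Finset.mem_union_left _ (hball k.succ)
      have he : ∀ j, x j ∈ T := fun j =>
        Finset.mem_union_right _ (Finset.mem_image_of_mem x (Finset.mem_univ j))
      have hd' : brel hm b ∈ M.relsIn ↑T := by
        refine ⟨hd.1, ?_⟩
        intro j
        exact Finset.mem_coe.mpr (Finset.mem_union_left _ (hball j))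
      rw [bdelta_M' M m hm b x M' hM hb hxinj hxnew hr T, hfilter, hfilter2, hK,
        if_pos he, if_pos hd', Finset.card_image_of_injective _ hxinj,
        Finset.card_univ, Fintype.card_fin]
      ring
  · refine ⟨T₀, subset_rfl, ?_, ?_⟩
    · rw [hc]
      exact fun u hu => Or.inl (hT₀ hu)
    · have hfilter : T₀.filter (fun u => u ∈ M.carrier) = T₀ :=
        Finset.filter_true_of_mem (fun u hu => hT₀ hu)
      have hfilter2 : T₀.filter (fun u => u ∉ M.carrier) = ∅ :=
        Finset.filter_false_of_mem (fun u hu h => h (hT₀ hu))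
      have hK : Finset.univ.filter
          (fun k : Fin m => b k.castSucc ∈ T₀ ∧ x k ∈ T₀ ∧ b k.succ ∈ T₀)
          = ∅ := by
        rw [Finset.filter_eq_empty_iff]
        intro k _
        exact fun h => hxnew k (hT₀ h.2.1)
      have he : ¬ ∀ j, x j ∈ T₀ := by
        intro h
        have h0 : (0 : ℕ) < m := by omega
        exact hxnew ⟨0, h0⟩ (hT₀ (h ⟨0, h0⟩))
      rw [bdelta_M' M m hm b x M' hM hb hxinj hxnew hr T₀, hfilter, hfilter2, hK,
        if_neg hd, if_neg he]
      simp


end Main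

end DerivAux

/-- derivative replacement preserves dimension: with
`M ∈ 𝒞̄_{ω(3)}` and `M^{b̄}` obtained by replacing an `(m+1)`-ary tuple `b`
(`m + 1 ≥ 4`) by the ternary chain through new points `x₁,…,x_m` together with the
`m`-ary relation `(x₁,…,x_m)`, the inclusion `M → M^{b̄}` is an embedding of
pregeometries: `d_M(A) = d_{M^{b̄}}(A)` for all finite `A ⊆ M`. -/
theorem derivative_preserves_dim {U : Type} (M : BigFS Iw arw U)
    (hM : inCbar (fun _ => 1) M)
    (m : ℕ) (hm : 3 ≤ m) (b : Fin (m + 1) → U)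
    (hb : (⟨⟨m + 1, by omega⟩, b⟩ : (i : Iw) × (Fin i.1 → U)) ∈ M.rels)
    (x : Fin m → U) (hxinj : Function.Injective x)
    (hxnew : ∀ k, x k ∉ M.carrier)
    (M' : BigFS Iw arw U)
    (hc : M'.carrier = M.carrier ∪ Set.range x)
    (hr : M'.rels =
      (M.rels \ {(⟨⟨m + 1, by omega⟩, b⟩ : (i : Iw) × (Fin i.1 → U))}) ∪
      {r | ∃ k : Fin m, r = (⟨⟨3, le_refl 3⟩,
          ![b k.castSucc, x k, b k.succ]⟩ : (i : Iw) × (Fin i.1 → U))} ∪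
      {(⟨⟨m, hm⟩, x⟩ : (i : Iw) × (Fin i.1 → U))}) :
    ∀ A : Finset U, ↑A ⊆ M.carrier →
      dim (fun _ => 1) M A = dim (fun _ => 1) M' A := by
  classical
  intro A hA
  have hA' : ↑A ⊆ M'.carrier := by
    rw [hc]; exact fun u hu => Or.inl (hA hu)
  unfold dim
  set S : Set ℤ := {z : ℤ | ∃ T : Finset U, A ⊆ T ∧ ↑T ⊆ M.carrier ∧
    bdelta (fun _ => 1) M T = z} with hSdef
  set S' : Set ℤ := {z : ℤ | ∃ T : Finset U, A ⊆ T ∧ ↑T ⊆ M'.carrier ∧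
    bdelta (fun _ => 1) M' T = z} with hS'def
  have hSne : S.Nonempty := ⟨_, A, subset_rfl, hA, rfl⟩
  have hS'ne : S'.Nonempty := ⟨_, A, subset_rfl, hA', rfl⟩
  have hSbdd : BddBelow S := by
    refine ⟨0, ?_⟩
    rintro z ⟨T, -, hT, rfl⟩
    exact (hM T hT).2
  have key : ∀ T : Finset U, A ⊆ T → ↑T ⊆ M'.carrier →
      ∃ w ∈ S, w ≤ bdelta (fun _ => 1) M' T := by
    intro T hAT hT
    refine ⟨bdelta (fun _ => 1) M (T.filter (fun u => u ∈ M.carrier)),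
      ⟨T.filter (fun u => u ∈ M.carrier), ?_, ?_, rfl⟩,
      DerivAux.bdelta_M'_ge M m hm b x M' hM hb hxinj hxnew hr T⟩
    · intro a ha
      rw [Finset.mem_filter]
      exact ⟨hAT ha, hA ha⟩
    · intro u hu
      have := Finset.mem_coe.mp hu
      rw [Finset.mem_filter] at this
      exact this.2
  have hS'bdd : BddBelow S' := by
    refine ⟨0, ?_⟩
    rintro z ⟨T, hAT, hT, rfl⟩
    obtain ⟨w, ⟨T1, -, hT1, rfl⟩, hle⟩ := key T hAT hT
    exact le_trans (hM T1 hT1).2 hle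
  apply le_antisymm
  · apply le_csInf hS'ne
    rintro z ⟨T, hAT, hT, rfl⟩
    obtain ⟨w, hw, hle⟩ := key T hAT hT
    exact le_trans (csInf_le hSbdd hw) hle
  · apply le_csInf hSne
    rintro z ⟨T₀, hAT₀, hT₀, rfl⟩
    obtain ⟨T, hsub, hT, heq⟩ :=
      DerivAux.exists_matching M m hm b x M' hM hb hxinj hxnew hc hr T₀ hT₀
    exact csInf_le hS'bdd ⟨T, hAT₀.trans hsub, hT, heq⟩
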